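/- arXiv:1905.07704 — 7 statements merged into one kernel-verified Lean document; each statement's English description precedes it below -/
import Mathlib

section
/- Let (φ, Q, ξ, η) be a linear model of a weak almost contact structure on a finite-dimensional real vector space V, and let ⟨·,·⟩ be a compatible inner product. Then φ is skew-adjoint: ⟨φ X, Y⟩ = −⟨X, φ Y⟩ for all X, Y ∈ V. -/
open scoped RealInnerProductSpace

/-- For a linear model of a weak almost contact structure `(φ, Q, ξ, η)`
on a finite-dimensional real vector space `V` with a compatible inner product,
`φ` is skew-adjoint. -/
theorem weak_almost_contact_metric_phi_skewAdjoint
    {V : Type*} [NormedAddCommGroup V] [InnerProductSpace ℝ V] [FiniteDimensional ℝ V]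
    (φ Q : V →ₗ[ℝ] V) (hQ : Function.Bijective Q)
    (ξ : V) (η : V →ₗ[ℝ] ℝ)
    (h1 : ∀ X : V, φ (φ X) = -(Q X) + η X • ξ)
    (h2 : η ξ = 1)
    (h3 : Q ξ = ξ)
    (hcomp : ∀ X Y : V, ⟪φ X, φ Y⟫ = ⟪X, Q Y⟫ - η X * η Y) :
    ∀ X Y : V, ⟪φ X, Y⟫ = -⟪X, φ Y⟫ := by
  have hξne : ξ ≠ 0 := by
    intro h
    rw [h, map_zero] at h2
    exact one_ne_zero h2.symm
  -- φ²ξ = 0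
  have hphi2xi : φ (φ ξ) = 0 := by rw [h1, h3, h2, one_smul, neg_add_cancel]
  -- φ ξ = 0
  have hphixi : φ ξ = 0 := by
    have ha := h1 (φ ξ)
    rw [hphi2xi, map_zero] at ha
    have hb : Q (φ ξ) = Q (η (φ ξ) • ξ) := by
      rw [map_smul, h3]
      linear_combination (norm := module) ha
    have hc : φ ξ = η (φ ξ) • ξ := hQ.injective hb
    set c := η (φ ξ) with hc0
    have hd : (0 : V) = (c * c) • ξ := by
      calc (0 : V) = φ (φ ξ) := hphi2xi.symm
        _ = φ (c • ξ) := congrArg φ hc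
        _ = c • φ ξ := map_smul φ c ξ
        _ = c • (c • ξ) := congrArg (c • ·) hc
        _ = (c * c) • ξ := smul_smul c c ξ
    have he : c = 0 := by
      by_contra hne
      exact hξne (by
        have := hd.symm
        rwa [smul_eq_zero, or_iff_right (mul_ne_zero hne hne)] at this)
    rw [hc, he, zero_smul]
  -- η X = ⟪X, ξ⟫
  have hη : ∀ X : V, η X = ⟪X, ξ⟫ := by
    intro X
    have := hcomp X ξ
    rw [hphixi, inner_zero_right, h3, h2, mul_one] at this
    linarith
  -- Q self-adjoint
  have hQsa : ∀ X Y : V, ⟪Q X, Y⟫ = ⟪X, Q Y⟫ := by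
    intro X Y
    have hx := hcomp X Y
    have hy := hcomp Y X
    have hcq := real_inner_comm (Q X) Y
    have hcxy := real_inner_comm (φ X) (φ Y)
    linear_combination hx - hy + hcxy - hcq
  -- η ∘ Q = η
  have hηQ : ∀ X : V, η (Q X) = η X := by
    intro X
    rw [hη, hη, hQsa, h3]
  -- φ Q X = Q φ X - η(φX) • ξ
  have hcomm : ∀ X : V, φ (Q X) = Q (φ X) - η (φ X) • ξ := by
    intro X
    have ha := h1 (φ X)
    have hb : φ (φ (φ X)) = -(φ (Q X)) := by
      rw [h1 X, map_add, map_neg, map_smul, hphixi, smul_zero, add_zero]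
    rw [hb] at ha
    linear_combination (norm := module) -ha
  -- η ∘ φ = 0
  have hf : ∀ X : V, η (φ X) = 0 := by
    intro X
    obtain ⟨W, hW⟩ := hQ.surjective (φ X)
    -- Q (φ W) = Q (-X + (η X + η (φ W)) • ξ)
    have ha : Q (φ W) = Q (-X + (η X + η (φ W)) • ξ) := by
      have hb := hcomm W
      rw [hW] at hb
      rw [h1 X] at hb
      rw [map_add, map_neg, map_smul, h3]
      linear_combination (norm := module) -hb
    have hc : φ W = -X + (η X + η (φ W)) • ξ := hQ.injective ha
    -- φ (φ W) = - φ X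
    have hd : φ (φ W) = -(φ X) := by
      rw [hc, map_add, map_neg, map_smul, hphixi, smul_zero, add_zero]
    have he := h1 W
    rw [hd, hW] at he
    -- -(φ X) = -(φ X) + η W • ξ  ⇒ η W = 0
    have hg : η W • ξ = 0 := by linear_combination (norm := module) -he
    have hW0 : η W = 0 := by
      rcases smul_eq_zero.mp hg with h | h
      · exact h
      · exact absurd h hξne
    calc η (φ X) = η (Q W) := by rw [hW]
      _ = η W := hηQ W
      _ = 0 := hW0
  -- final
  intro X Y
  obtain ⟨Z, hZ⟩ := hQ.surjective Y
  have ha := hcomp (φ X) Z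
  rw [h1 X, hf X, zero_mul, sub_zero] at ha
  rw [inner_add_left, inner_neg_left, inner_smul_left] at ha
  have hb : ⟪ξ, φ Z⟫ = 0 := by
    rw [real_inner_comm, ← hη, hf]
  rw [hb, mul_zero, add_zero] at ha
  -- ha : -⟪Q X, φ Z⟫ = ⟪φ X, Q Z⟫
  have hcz := hcomm Z
  rw [hf, zero_smul, sub_zero] at hcz
  rw [← hZ]
  rw [← ha, hQsa, ← hcz]
end

section
/- Let (φ, Q, ξ, η) be a linear model of a weak almost contact structure on a finite-dimensional real vector space V, and let ⟨·,·⟩ be a compatible inner product. Then η ∘ φ = 0, i.e. η(φ X) = 0 for all X ∈ V, and Q commutes with φ: Q ∘ φ = φ ∘ Q. -/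
open scoped RealInnerProductSpace

/-- For a linear model of a weak almost contact structure `(φ, Q, ξ, η)`
on a finite-dimensional real vector space `V` with a compatible inner product,
one has `η ∘ φ = 0` and `Q` commutes with `φ`. -/
theorem weak_almost_contact_metric_eta_phi_eq_zero_and_Q_comm_phi
    {V : Type*} [NormedAddCommGroup V] [InnerProductSpace ℝ V] [FiniteDimensional ℝ V]
    (φ Q : V →ₗ[ℝ] V) (hQ : Function.Bijective Q)
    (ξ : V) (η : V →ₗ[ℝ] ℝ)
    (h1 : ∀ X : V, φ (φ X) = -(Q X) + η X • ξ)
    (h2 : η ξ = 1)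
    (h3 : Q ξ = ξ)
    (hcomp : ∀ X Y : V, ⟪φ X, φ Y⟫ = ⟪X, Q Y⟫ - η X * η Y) :
    (∀ X : V, η (φ X) = 0) ∧ Q ∘ₗ φ = φ ∘ₗ Q := by
  -- Q is self-adjoint
  have Qsa : ∀ X Y : V, ⟪Q X, Y⟫ = ⟪X, Q Y⟫ := by
    intro X Y
    have hsym : ⟪φ X, φ Y⟫ = ⟪φ Y, φ X⟫ := real_inner_comm _ _
    have hsym2 : ⟪Q X, Y⟫ = ⟪Y, Q X⟫ := real_inner_comm _ _
    have e1 := hcomp X Y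
    have e2 := hcomp Y X
    linarith
  -- φ² ξ = 0
  have hφφξ : φ (φ ξ) = 0 := by
    rw [h1 ξ, h2, h3, one_smul, neg_add_cancel]
  -- Q (φ ξ) = η (φ ξ) • ξ
  have hQφξ : Q (φ ξ) = η (φ ξ) • ξ := by
    have h' := h1 (φ ξ)
    rw [hφφξ, map_zero] at h'
    have h'' : -(Q (φ ξ)) + η (φ ξ) • ξ = 0 := h'.symm
    rw [neg_add_eq_zero] at h''
    exact h''
  -- φ ξ = η (φ ξ) • ξ
  have hφξ' : φ ξ = η (φ ξ) • ξ := by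
    apply hQ.injective
    rw [hQφξ, map_smul, h3]
  -- η (φ ξ) = 0 and φ ξ = 0
  have hξne : ξ ≠ 0 := by
    intro h; rw [h, map_zero] at h2; exact one_ne_zero h2.symm
  have hηφξ : η (φ ξ) = 0 := by
    have h0 : (η (φ ξ) * η (φ ξ)) • ξ = 0 := by
      calc (η (φ ξ) * η (φ ξ)) • ξ = η (φ ξ) • (η (φ ξ) • ξ) := by rw [smul_smul]
        _ = η (φ ξ) • φ ξ := by rw [← hφξ']
        _ = φ (η (φ ξ) • ξ) := by rw [map_smul]
        _ = φ (φ ξ) := by rw [← hφξ']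
        _ = 0 := hφφξ
    rcases smul_eq_zero.mp h0 with h | h
    · exact mul_self_eq_zero.mp h
    · exact absurd h hξne
  have hφξ : φ ξ = 0 := by rw [hφξ', hηφξ, zero_smul]
  -- η X = ⟪X, ξ⟫
  have hη : ∀ X : V, η X = ⟪X, ξ⟫ := by
    intro X
    have := hcomp X ξ
    rw [hφξ, inner_zero_right, h3, h2, mul_one] at this
    linarith
  -- η (Q X) = η X
  have hηQ : ∀ X : V, η (Q X) = η X := by
    intro X
    rw [hη, hη, Qsa, h3]
  -- key identity: φ (Q X) = Q (φ X) - η (φ X) • ξ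
  have key : ∀ X : V, φ (Q X) = Q (φ X) - η (φ X) • ξ := by
    intro X
    have e1 : φ (φ (φ X)) = -(Q (φ X)) + η (φ X) • ξ := h1 (φ X)
    have e2 : φ (φ (φ X)) = -(φ (Q X)) := by
      rw [h1 X, map_add, map_neg, map_smul, hφξ, smul_zero, add_zero]
    rw [e2] at e1
    have : φ (Q X) = -(-(Q (φ X)) + η (φ X) • ξ) := by rw [← e1, neg_neg]
    rw [this]; abel
  -- η ∘ φ = 0
  have hηφ : ∀ X : V, η (φ X) = 0 := by
    intro X
    obtain ⟨Y, hY⟩ := hQ.surjective X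
    have := congrArg η (key Y)
    rw [map_sub, map_smul, smul_eq_mul, h2, mul_one, hηQ (φ Y), sub_self] at this
    rw [← hY]; exact this
  refine ⟨hηφ, ?_⟩
  ext X
  simp only [LinearMap.comp_apply]
  have := key X
  rw [hηφ X, zero_smul, sub_zero] at this
  exact this.symm
end

section
/- Let (φ_i, Q, ξ_i, η^i, ε), i = 1,…,p, be a linear model of a weak almost p-contact structure on a finite-dimensional real vector space V, and let ⟨·,·⟩ be a compatible inner product. Then the vectors ξ_1, …, ξ_p are orthonormal: ⟨ξ_i, ξ_j⟩ = δ_{ij}. -/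
open scoped RealInnerProductSpace

/-- For a linear model of a weak almost `p`-contact structure
`(φ_i, Q, ξ_i, η^i, ε)` on a finite-dimensional real vector space `V` with a compatible
inner product, the vectors `ξ_1, …, ξ_p` are orthonormal. -/
theorem weak_almost_p_contact_metric_xi_orthonormal
    {V : Type*} [NormedAddCommGroup V] [InnerProductSpace ℝ V] [FiniteDimensional ℝ V]
    (p : ℕ) (hp : 1 ≤ p)
    (φ : Fin p → V →ₗ[ℝ] V) (Q : V →ₗ[ℝ] V) (hQ : Function.Bijective Q)
    (ξ : Fin p → V) (η : Fin p → (V →ₗ[ℝ] ℝ))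
    (ε : Fin p → Fin p → Fin p → ℝ)
    (hε12 : ∀ i j k, ε j i k = -ε i j k)
    (hε23 : ∀ i j k, ε i k j = -ε i j k)
    (h1 : ∀ i j, ∀ X : V, φ i (φ j X) =
      -((if i = j then (1 : ℝ) else 0) • Q X) + η j X • ξ i + ∑ k, ε i j k • φ k X)
    (h2 : ∀ i j, η i (ξ j) = if i = j then 1 else 0)
    (h3 : ∀ i, Q (ξ i) = ξ i)
    (hcomp : ∀ i, ∀ X Y : V, ⟪φ i X, φ i Y⟫ = ⟪X, Q Y⟫ - η i X * η i Y) :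
    ∀ i j, ⟪ξ i, ξ j⟫ = if i = j then 1 else 0 := by
  -- ε_iik = 0
  have hεii : ∀ i k, ε i i k = 0 := by
    intro i k
    have := hε12 i i k
    linarith
  have hξne : ∀ i, ξ i ≠ 0 := by
    intro i h
    have := h2 i i
    rw [h] at this
    simp at this
  -- φ_i (φ_i (ξ i)) = 0
  have hφφ : ∀ i, φ i (φ i (ξ i)) = 0 := by
    intro i
    have := h1 i i (ξ i)
    simp only [if_pos rfl, one_smul, h2 i i, h3 i, hεii, zero_smul,
      Finset.sum_const_zero] at this
    rw [this]
    abel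
  -- φ_i (ξ i) = 0
  have hφξ : ∀ i, φ i (ξ i) = 0 := by
    intro i
    set w := φ i (ξ i) with hw
    set a := η i w with ha
    have h4 := h1 i i w
    rw [hφφ i] at h4
    simp only [if_pos rfl, if_true, one_smul, hεii, zero_smul, Finset.sum_const_zero,
      add_zero, map_zero] at h4
    -- 0 = -(Q w) + a • ξ i
    have hQw : Q w = a • ξ i := by
      have h5 : -(Q w) + a • ξ i = 0 := h4.symm
      rw [neg_add_eq_zero] at h5
      exact h5
    have hwa : w = a • ξ i := by
      apply hQ.injective
      rw [hQw, map_smul, h3 i]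
    -- 0 = φ i w = a • w = a² • ξ i
    have h0 : (a * a) • ξ i = 0 := by
      have : φ i w = a • φ i (ξ i) := by rw [hwa, map_smul]
      rw [hφφ i] at this
      rw [← hw, hwa, smul_smul] at this
      exact this.symm
    have ha0 : a * a = 0 := by
      by_contra h
      exact hξne i (by simpa [h] using (smul_eq_zero.mp h0).resolve_left h)
    have : a = 0 := by nlinarith
    rw [hwa, this, zero_smul]
  intro i j
  have := hcomp i (ξ j) (ξ i)
  rw [hφξ i, inner_zero_right, h3 i, h2 i i, h2 i j] at this
  simp only [if_pos rfl, if_true, mul_one] at this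
  have hij : ⟪ξ j, ξ i⟫ = if i = j then (1:ℝ) else 0 := by linarith
  rw [real_inner_comm, hij]
end

section
/- Let (f, Q, ξ_i, η^i), i = 1,…,p, be a linear model of a weak globally framed f-structure on a finite-dimensional real vector space V, and let ⟨·,·⟩ be a compatible inner product. Then f is skew-adjoint (⟨f X, Y⟩ = −⟨X, f Y⟩ for all X, Y ∈ V) and η^i ∘ f = 0 for each i, i.e. η^i(f X) = 0 for all X ∈ V. -/
open scoped RealInnerProductSpace

/-- For a linear model of a weak globally framed `f`-structure
`(f, Q, ξ_i, η^i)` on a finite-dimensional real vector space `V` with a compatible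
inner product, `f` is skew-adjoint and `η^i ∘ f = 0` for each `i`. -/
theorem weak_framed_f_structure_metric_f_skew_and_eta_f_zero
    {V : Type*} [NormedAddCommGroup V] [InnerProductSpace ℝ V] [FiniteDimensional ℝ V]
    (p : ℕ) (hp : 1 ≤ p)
    (f Q : V →ₗ[ℝ] V) (hQ : Function.Bijective Q)
    (ξ : Fin p → V) (η : Fin p → (V →ₗ[ℝ] ℝ))
    (hf3 : ∀ X : V, f (f (f X)) + f (Q X) = 0)
    (hf2 : ∀ X : V, f (f X) = -(Q X) + ∑ i, η i X • ξ i)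
    (h2 : ∀ i j, η i (ξ j) = if i = j then 1 else 0)
    (h3 : ∀ i, Q (ξ i) = ξ i)
    (hcomp : ∀ X Y : V, ⟪f X, f Y⟫ = ⟪X, Q Y⟫ - ∑ i, η i X * η i Y) :
    (∀ X Y : V, ⟪f X, Y⟫ = -⟪X, f Y⟫) ∧ (∀ i, ∀ X : V, η i (f X) = 0) := by
  -- f kills the ξ's
  have hsum : ∀ X : V, ∑ i, η i X • f (ξ i) = 0 := by
    intro X
    have h1 := hf3 X
    have h2' : f (f (f X)) = -(f (Q X)) + ∑ i, η i X • f (ξ i) := by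
      rw [hf2 X, map_add, map_neg, map_sum]
      simp [map_smul]
    rw [h2'] at h1
    linear_combination (norm := abel) h1
  have hfxi : ∀ j, f (ξ j) = 0 := by
    intro j
    have := hsum (ξ j)
    simpa [h2, Finset.sum_ite_eq] using this
  -- η j X = ⟪X, ξ j⟫
  have heta : ∀ (j) (X : V), η j X = ⟪X, ξ j⟫ := by
    intro j X
    have := hcomp X (ξ j)
    rw [hfxi j, h3 j] at this
    simp only [inner_zero_right] at this
    have hs : ∑ i, η i X * η i (ξ j) = η j X := by
      simp [h2, Finset.sum_ite_eq]
    rw [hs] at this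
    linarith
  -- Q is self-adjoint
  have hQsym : ∀ X Y : V, ⟪X, Q Y⟫ = ⟪Q X, Y⟫ := by
    intro X Y
    have hx := hcomp X Y
    have hy := hcomp Y X
    have hss : ∑ i, η i X * η i Y = ∑ i, η i Y * η i X :=
      Finset.sum_congr rfl fun i _ => mul_comm _ _
    linarith [hx, hy, hss, real_inner_comm (f X) (f Y), real_inner_comm Y (Q X)]
  have hQeta : ∀ (j) (X : V), η j (Q X) = η j X := by
    intro j X
    rw [heta, heta, ← hQsym, h3]
  -- η j (f (f X)) = 0
  have hff : ∀ (j) (X : V), η j (f (f X)) = 0 := by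
    intro j X
    rw [hf2 X, map_add, map_neg, map_sum]
    have hs : ∑ i, η j (η i X • ξ i) = η j X := by
      simp only [map_smul, smul_eq_mul]
      have : ∀ i, η i X * η j (ξ i) = if j = i then η i X else 0 := by
        intro i; rw [h2]; split <;> simp_all
      simp [this, Finset.sum_ite_eq]
    rw [hs, hQeta]
    ring
  -- η j (f X) = 0
  have hetaf : ∀ (j) (X : V), η j (f X) = 0 := by
    intro j X
    obtain ⟨Z, hZ⟩ := hQ.2 X
    have h1 := hf3 Z
    have hfq : f (Q Z) = -(f (f (f Z))) := by linear_combination (norm := abel) h1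
    rw [← hZ, hfq, map_neg, hff]
    ring
  refine ⟨?_, hetaf⟩
  intro X Y
  obtain ⟨Z, hZ⟩ := hQ.2 Y
  have way1 : ⟪f (f X), f Z⟫ = ⟪f X, Y⟫ := by
    rw [hcomp (f X) Z, hZ]
    simp [hetaf]
  have way2 : ⟪f (f X), f Z⟫ = -⟪X, f Y⟫ := by
    rw [hf2 X, ← hZ]
    have hs : ∀ i, ⟪η i X • ξ i, f Z⟫ = 0 := by
      intro i
      rw [real_inner_smul_left, real_inner_comm, ← heta, hetaf]
      ring
    rw [inner_add_left, inner_neg_left, sum_inner]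
    simp only [hs, Finset.sum_const_zero, add_zero]
    rw [← hQsym X (f Z)]
    congr 2
    -- Q (f Z) = f (Q Z)
    have h1 := hf3 Z
    have h2' := hf2 (f Z)
    simp only [hetaf, zero_smul, Finset.sum_const_zero, add_zero] at h2'
    rw [h2'] at h1
    linear_combination (norm := module) -h1
  rw [← way1, way2]
end

section
/- Let (φ, Q, ξ_i, η^i), i = 1,…,p, be a linear model of a weak almost para-φ-structure with complemented frames on a finite-dimensional real vector space V, and let ⟨·,·⟩ be a compatible inner product. Then φ is skew-adjoint (⟨φ X, Y⟩ = −⟨X, φ Y⟩ for all X, Y ∈ V) and η^i ∘ φ = 0 for each i, i.e. η^i(φ X) = 0 for all X ∈ V. -/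
open scoped RealInnerProductSpace

/-- For a linear model of a weak almost para-φ-structure with complemented
frames `(φ, Q, ξ_i, η^i)` on a finite-dimensional real vector space `V` with a compatible
inner product, `φ` is skew-adjoint and `η^i ∘ φ = 0` for each `i`. -/
theorem weak_almost_para_phi_metric_phi_skew_and_eta_phi_zero
    {V : Type*} [NormedAddCommGroup V] [InnerProductSpace ℝ V] [FiniteDimensional ℝ V]
    (p : ℕ) (hp : 1 ≤ p)
    (φ Q : V →ₗ[ℝ] V) (hQ : Function.Bijective Q)
    (ξ : Fin p → V) (η : Fin p → (V →ₗ[ℝ] ℝ))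
    (hφ3 : ∀ X : V, φ (φ (φ X)) - φ (Q X) = 0)
    (hφ2 : ∀ X : V, φ (φ X) = Q X - ∑ i, η i X • ξ i)
    (h2 : ∀ i j, η i (ξ j) = if i = j then 1 else 0)
    (h3 : ∀ i, Q (ξ i) = ξ i)
    (hcomp : ∀ X Y : V, ⟪φ X, φ Y⟫ = -⟪X, Q Y⟫ + ∑ i, η i X * η i Y) :
    (∀ X Y : V, ⟪φ X, Y⟫ = -⟪X, φ Y⟫) ∧ (∀ i, ∀ X : V, η i (φ X) = 0) := by
  classical
  -- ∑ η i X • φ ξ i = 0 for all X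
  have hsum0 : ∀ X : V, ∑ i, η i X • φ (ξ i) = 0 := by
    intro X
    have h : φ (φ (φ X)) = φ (Q X) := sub_eq_zero.mp (hφ3 X)
    have h' : φ (φ (φ X)) = φ (Q X) - ∑ i, η i X • φ (ξ i) := by
      conv_lhs => rw [hφ2 X]
      rw [map_sub, map_sum]
      simp [map_smul]
    rw [h] at h'
    exact sub_eq_self.mp h'.symm
  -- φ ξ j = 0
  have hφξ : ∀ j, φ (ξ j) = 0 := by
    intro j
    have h := hsum0 (ξ j)
    simpa [h2, ite_smul, Finset.sum_ite_eq] using h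
  -- η i X = ⟪X, ξ i⟫
  have hη : ∀ (i) (X : V), η i X = ⟪X, ξ i⟫ := by
    intro i X
    have h := hcomp X (ξ i)
    rw [hφξ i, inner_zero_right, h3 i] at h
    have hs : ∑ j, η j X * η j (ξ i) = η i X := by
      simp [h2, Finset.sum_ite_eq]
    rw [hs] at h
    linarith
  -- Q is self-adjoint
  have hQsym : ∀ X Y : V, ⟪X, Q Y⟫ = ⟪Q X, Y⟫ := by
    intro X Y
    have h1 := hcomp X Y
    have h2' := hcomp Y X
    have hc : ⟪φ X, φ Y⟫ = ⟪φ Y, φ X⟫ := real_inner_comm _ _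
    have hs : ∑ i, η i Y * η i X = ∑ i, η i X * η i Y :=
      Finset.sum_congr rfl fun i _ => mul_comm _ _
    rw [hs] at h2'
    have h3' : ⟪X, Q Y⟫ = ⟪Y, Q X⟫ := by linarith
    rw [h3', real_inner_comm]
  -- η i (Q X) = η i X
  have hηQ : ∀ (i) (X : V), η i (Q X) = η i X := by
    intro i X
    rw [hη, hη, real_inner_comm, hQsym, h3, real_inner_comm]
  -- η i (φ (φ X)) = 0
  have hηφ2 : ∀ (i) (X : V), η i (φ (φ X)) = 0 := by
    intro i X
    rw [hφ2 X, map_sub, map_sum]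
    have hs : ∑ j, η i (η j X • ξ j) = η i X := by
      simp [map_smul, h2, Finset.sum_ite_eq']
    rw [hs, hηQ, sub_self]
  -- η i ∘ φ = 0
  have hηφ : ∀ (i) (X : V), η i (φ X) = 0 := by
    intro i X
    obtain ⟨X', rfl⟩ := hQ.2 X
    have h : φ (Q X') = φ (φ (φ X')) := (sub_eq_zero.mp (hφ3 X')).symm
    rw [h]
    exact hηφ2 i (φ X')
  refine ⟨?_, hηφ⟩
  -- φ commutes with Q
  have hcomm : ∀ X : V, φ (Q X) = Q (φ X) := by
    intro X
    have h : φ (φ (φ X)) = φ (Q X) := sub_eq_zero.mp (hφ3 X)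
    have h' := hφ2 (φ X)
    rw [h] at h'
    simp only [hηφ, zero_smul, Finset.sum_const_zero, sub_zero] at h'
    exact h'
  -- skew-adjointness
  intro X Y
  obtain ⟨Y', rfl⟩ := hQ.2 Y
  have h := hcomp X (φ Y')
  simp only [hηφ, mul_zero, Finset.sum_const_zero, add_zero] at h
  -- LHS: ⟪φ X, φ (φ Y')⟫ = ⟪φ X, Q Y'⟫ - ∑ j, η j Y' * ⟪φ X, ξ j⟫ = ⟪φ X, Q Y'⟫
  have hlhs : ⟪φ X, φ (φ Y')⟫ = ⟪φ X, Q Y'⟫ := by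
    rw [hφ2 Y', inner_sub_right, inner_sum]
    have : ∀ j : Fin p, ⟪φ X, η j Y' • ξ j⟫ = 0 := by
      intro j
      rw [real_inner_smul_right]
      have : ⟪φ X, ξ j⟫ = 0 := by rw [← hη]; exact hηφ j X
      rw [this, mul_zero]
    simp only [this, Finset.sum_const_zero, sub_zero]
  rw [hlhs] at h
  rw [h, hcomm]
end

section
/- Let V be a finite-dimensional real inner product space, let Z₀ be a self-adjoint positive-definite linear endomorphism of V, and let a > 0, c > 0 be real numbers. For t ≤ 0 set S(t) = Z₀ + exp(a c t)(c·id − Z₀), where id is the identity endomorphism. Then: (i) S(t) is invertible for every t ≤ 0; (ii) Z(t) := c · Z₀ ∘ S(t)⁻¹ is self-adjoint for every t ≤ 0, with Z(0) = Z₀; (iii) the map t ↦ Z(t) is differentiable on (−∞, 0] with derivative Z′(t) = a · Z(t) ∘ (Z(t) − c·id); and (iv) Z(t) → c·id as t → −∞ (in the space of endomorphisms of V). -/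
/-!
For `t ≤ 0` the parameter `exp (a c t)` lies in `(0, 1]`, so `S t` is a convex combination of the
positive-definite operators `Z₀` and `c • 1`, hence invertible; being a polynomial in `Z₀`, it is
self-adjoint and commutes with `Z₀`, which makes `Z t` self-adjoint. Since
`Ṡ = a c (S - Z₀)`, the operator `W = Z₀ S⁻¹` satisfies
`Ẇ = -a c Z₀ S⁻¹ (S - Z₀) S⁻¹ = a c (W² - W)`, which is the Riccati equation for `Z = c W`.
Finally `S t → Z₀` as `t → -∞`, and inversion is continuous at units, so `Z t → c Z₀ Z₀⁻¹ = c • 1`.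
-/

open scoped RealInnerProductSpace
open Filter Topology

theorem Commute.ringInverse_right {M₀ : Type*} [MonoidWithZero M₀] {a b : M₀}
    (h : Commute a b) : Commute a (Ring.inverse b) := by
  by_cases hb : IsUnit b
  · lift b to M₀ˣ using hb
    rw [Ring.inverse_unit]
    exact h.units_inv_right
  · rw [Ring.inverse_non_unit b hb]
    exact Commute.zero_right a

theorem IsSelfAdjoint.mul_ringInverse_of_commute {A : Type*} [Semiring A] [StarRing A] {a b : A}
    (ha : IsSelfAdjoint a) (hb : IsSelfAdjoint b) (hab : Commute a b) :
    IsSelfAdjoint (a * Ring.inverse b) :=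
  (ha.commute_iff hb.ringInverse).1 hab.ringInverse_right

theorem Commute.self_add_smul_smul_one_sub {R : Type*} [Ring R] [Algebra ℝ R] (x : R)
    (r c : ℝ) : Commute x (x + r • (c • 1 - x)) :=
  (Commute.refl x).add_right
    ((((Commute.one_right x).smul_right c).sub_right (Commute.refl x)).smul_right r)

theorem IsSelfAdjoint.add_smul_smul_one_sub {R : Type*} [Ring R] [StarRing R] [Algebra ℝ R]
    [StarModule ℝ R] {x : R} (hx : IsSelfAdjoint x) (r c : ℝ) :
    IsSelfAdjoint (x + r • (c • 1 - x)) :=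
  hx.add <| (IsSelfAdjoint.all r).smul <| ((IsSelfAdjoint.all c).smul (IsSelfAdjoint.one R)).sub hx

theorem HasDerivAt.ringInverse {𝕜 R : Type*} [NontriviallyNormedField 𝕜] [NormedRing R]
    [HasSummableGeomSeries R] [NormedAlgebra 𝕜 R] {f : 𝕜 → R} {f' : R} {t : 𝕜}
    (hf : HasDerivAt f f' t) (hu : IsUnit (f t)) :
    HasDerivAt (fun s => Ring.inverse (f s))
      (-(Ring.inverse (f t) * f' * Ring.inverse (f t))) t := by
  have hinv := hasFDerivAt_ringInverse (𝕜 := 𝕜) hu.unit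
  rw [hu.unit_spec, ← Ring.inverse_of_isUnit hu] at hinv
  exact hinv.comp_hasDerivAt t hf

theorem Filter.Tendsto.ringInverse {α R : Type*} [NormedRing R] [HasSummableGeomSeries R]
    {l : Filter α} {f : α → R} {x : R} (hf : Tendsto f l (𝓝 x)) (hx : IsUnit x) :
    Tendsto (fun a => Ring.inverse (f a)) l (𝓝 (Ring.inverse x)) := by
  obtain ⟨u, rfl⟩ := hx
  exact (NormedRing.inverse_continuousAt u).tendsto.comp hf

theorem HasDerivAt.smul_mul_ringInverse {R : Type*} [NormedRing R] [HasSummableGeomSeries R]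
    [NormedAlgebra ℝ R] {S : ℝ → R} {A : R} {a c t : ℝ}
    (hS : HasDerivAt S ((a * c) • (S t - A)) t) (hu : IsUnit (S t)) :
    HasDerivAt (fun s => c • (A * Ring.inverse (S s)))
      (a • (c • (A * Ring.inverse (S t)) * (c • (A * Ring.inverse (S t)) - c • 1))) t := by
  refine (((hS.ringInverse hu).const_mul A).const_smul c).congr_deriv ?_
  set W := Ring.inverse (S t)
  have hW : W * ((a * c) • (S t - A)) * W = (a * c) • (W - W * A * W) := by
    rw [mul_smul_comm, smul_mul_assoc, mul_sub, sub_mul, Ring.inverse_mul_cancel _ hu, one_mul]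
  rw [hW]
  simp only [smul_mul_assoc, mul_smul_comm, mul_sub, mul_neg, mul_one, mul_assoc]
  module

theorem hasDerivAt_add_exp_mul_smul {E : Type*} [NormedAddCommGroup E] [NormedSpace ℝ E]
    (A B : E) (k t : ℝ) :
    HasDerivAt (fun s => A + Real.exp (k * s) • B) (k • (Real.exp (k * t) • B)) t := by
  have hexp : HasDerivAt (fun s => Real.exp (k * s)) (Real.exp (k * t) * k) t :=
    (Real.hasDerivAt_exp _).comp t ((hasDerivAt_id t).const_mul k |>.congr_deriv (mul_one k))
  simpa [smul_smul, mul_comm] using (hexp.smul_const B).const_add A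

theorem tendsto_add_exp_mul_smul_atBot {E : Type*} [NormedAddCommGroup E] [NormedSpace ℝ E]
    (A B : E) {k : ℝ} (hk : 0 < k) :
    Tendsto (fun s => A + Real.exp (k * s) • B) atBot (𝓝 A) := by
  have hexp : Tendsto (fun s => Real.exp (k * s)) atBot (𝓝 0) :=
    Real.tendsto_exp_atBot.comp (tendsto_id.const_mul_atBot hk)
  simpa using (hexp.smul_const B).const_add A

section InnerProduct

variable {V : Type*} [NormedAddCommGroup V] [InnerProductSpace ℝ V]

theorem isUnit_of_inner_map_self_pos [FiniteDimensional ℝ V] (T : V →L[ℝ] V)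
    (hT : ∀ x : V, x ≠ 0 → 0 < ⟪T x, x⟫) : IsUnit T := by
  have hinj : Function.Injective T := (injective_iff_map_eq_zero T).2 fun x hx =>
    by_contra fun hx0 => by simpa [hx] using hT x hx0
  exact T.isUnit_iff_bijective.2 ⟨hinj, LinearMap.injective_iff_surjective.1 hinj⟩

theorem inner_map_self_pos_add_smul_sub {A B : V →L[ℝ] V} (hA : ∀ x : V, x ≠ 0 → 0 < ⟪A x, x⟫)
    (hB : ∀ x : V, x ≠ 0 → 0 < ⟪B x, x⟫) {s : ℝ} (hs₀ : 0 ≤ s) (hs₁ : s ≤ 1) {x : V}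
    (hx : x ≠ 0) : 0 < ⟪(A + s • (B - A)) x, x⟫ := by
  have hsplit : ⟪(A + s • (B - A)) x, x⟫ = (1 - s) * ⟪A x, x⟫ + s * ⟪B x, x⟫ := by
    simp only [add_apply, smul_apply, sub_apply, inner_add_left, inner_sub_left,
      real_inner_smul_left]
    ring
  rw [hsplit]
  rcases hs₀.lt_or_eq with hs | rfl
  · nlinarith [hA x hx, hB x hx]
  · simpa using hA x hx

theorem inner_map_self_smul_one_pos {c : ℝ} (hc : 0 < c) {x : V} (hx : x ≠ 0) :
    0 < ⟪(c • (1 : V →L[ℝ] V)) x, x⟫ := by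
  simp only [smul_apply, one_apply_eq_self, real_inner_smul_left, real_inner_self_eq_norm_sq]
  positivity

end InnerProduct

/-- the operator Riccati equation `Ż = a Z (Z − c·id)`. With `Z₀`
self-adjoint positive definite, `S t = Z₀ + exp(a c t)(c·id − Z₀)` and
`Z t = c·Z₀ ∘ S(t)⁻¹`: `S t` is invertible for `t ≤ 0`, `Z t` is self-adjoint with
`Z 0 = Z₀`, `Z` solves the Riccati ODE, and `Z t → c·id` as `t → −∞`. -/
theorem operator_riccati_partial_ricci_flow
    {V : Type*} [NormedAddCommGroup V] [InnerProductSpace ℝ V] [FiniteDimensional ℝ V]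
    (a c : ℝ) (ha : 0 < a) (hc : 0 < c)
    (Z₀ : V →L[ℝ] V)
    (hsym : ∀ x y : V, ⟪Z₀ x, y⟫ = ⟪x, Z₀ y⟫)
    (hpos : ∀ x : V, x ≠ 0 → 0 < ⟪Z₀ x, x⟫)
    (S Z : ℝ → V →L[ℝ] V)
    (hS : ∀ t : ℝ, S t = Z₀ + Real.exp (a * c * t) • (c • (1 : V →L[ℝ] V) - Z₀))
    (hZ : ∀ t : ℝ, Z t = c • (Z₀ * Ring.inverse (S t))) :
    (∀ t ≤ (0 : ℝ), IsUnit (S t)) ∧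
    (∀ t ≤ (0 : ℝ), ∀ x y : V, ⟪Z t x, y⟫ = ⟪x, Z t y⟫) ∧
    Z 0 = Z₀ ∧
    (∀ t ≤ (0 : ℝ), HasDerivAt Z (a • (Z t * (Z t - c • (1 : V →L[ℝ] V)))) t) ∧
    Filter.Tendsto Z Filter.atBot (nhds (c • (1 : V →L[ℝ] V))) := by
  have hS_fun : S = fun t => Z₀ + Real.exp (a * c * t) • (c • (1 : V →L[ℝ] V) - Z₀) := funext hS
  have hZ_fun : Z = fun t => c • (Z₀ * Ring.inverse (S t)) := funext hZ
  have hunit (t : ℝ) (ht : t ≤ 0) : IsUnit (S t) := by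
    have hexp_le : Real.exp (a * c * t) ≤ 1 :=
      Real.exp_le_one_iff.2 (mul_nonpos_of_nonneg_of_nonpos (mul_pos ha hc).le ht)
    refine isUnit_of_inner_map_self_pos _ fun x hx => hS t ▸ ?_
    exact inner_map_self_pos_add_smul_sub hpos (fun _ => inner_map_self_smul_one_pos hc)
      (Real.exp_pos _).le hexp_le hx
  have hZ₀_sa : IsSelfAdjoint Z₀ := ContinuousLinearMap.isSelfAdjoint_iff_isSymmetric.2 hsym
  refine ⟨hunit, fun t _ => ?_, ?_, fun t ht => ?_, ?_⟩
  · have hS_sa := hZ₀_sa.add_smul_smul_one_sub (Real.exp (a * c * t)) c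
    rw [hZ t, hS t]
    exact ((IsSelfAdjoint.all c).smul (hZ₀_sa.mul_ringInverse_of_commute hS_sa
      (Commute.self_add_smul_smul_one_sub _ _ _))).isSymmetric
  · have hS₀ : S 0 = c • 1 := by simp [hS]
    rw [hZ, ← smul_mul_assoc, ← mul_smul_one, ← hS₀,
      Ring.mul_inverse_cancel_right _ _ (hunit 0 le_rfl)]
  · have hS_deriv : HasDerivAt S ((a * c) • (S t - Z₀)) t := by
      rw [hS t, add_sub_cancel_left, hS_fun]
      exact hasDerivAt_add_exp_mul_smul _ _ _ _
    rw [hZ_fun]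
    exact hS_deriv.smul_mul_ringInverse (hunit t ht)
  · have hZ₀_unit : IsUnit Z₀ := isUnit_of_inner_map_self_pos Z₀ hpos
    have hS_lim : Tendsto S atBot (𝓝 Z₀) := by
      simpa [hS_fun] using tendsto_add_exp_mul_smul_atBot Z₀ (c • 1 - Z₀) (mul_pos ha hc)
    have hZ_lim := ((hS_lim.ringInverse hZ₀_unit).const_mul Z₀).const_smul c
    rwa [Ring.mul_inverse_cancel _ hZ₀_unit, ← hZ_fun] at hZ_lim
end

section
/- Let Ψ₁, Ψ₂ be real numbers with Ψ₂ ≥ 0, and set μ₊ = (−Ψ₁ + √(Ψ₁² + Ψ₂))/2 and μ₋ = (−Ψ₁ − √(Ψ₁² + Ψ₂))/2. Then μ₊ and μ₋ are exactly the stationary solutions of the equation μ′ = 4μ(μ + Ψ₁) − Ψ₂ (i.e. 4μ₊(μ₊ + Ψ₁) − Ψ₂ = 0 and 4μ₋(μ₋ + Ψ₁) − Ψ₂ = 0), and μ₊ is an attractor as t → −∞: if μ : (−∞, 0] → ℝ is differentiable with μ′(t) = 4μ(t)(μ(t) + Ψ₁) − Ψ₂ for all t ≤ 0 and μ(0) >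 μ₋, then μ(t) → μ₊ as t → −∞. -/
/-!
Since `4x(x + Ψ₁) - Ψ₂ = 4(x - μ₊)(x - μ₋)`, each difference `μ - μ±` solves a linear equation
`h' = a h`, so by uniqueness it vanishes nowhere unless it vanishes everywhere. Hence a solution
with `μ(0) > μ₋` stays above `μ₋` and on one side of `μ₊`, so it is monotone and bounded on
`(-∞, 0]` and has a limit at `-∞`. That limit is a zero of the right-hand side, since otherwise
`μ'` would stay away from zero and `μ` would be unbounded, and it lies in `[min μ(0) μ₊, ∞)`,
so it is `μ₊`.
-/

open Set Filter Topology

theorem eqOn_zero_of_hasDerivAt_mul {a h : ℝ → ℝ} {t₀ t₁ s : ℝ}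
    (ha : ContinuousOn a (Icc t₀ t₁)) (hh : ∀ t ∈ Icc t₀ t₁, HasDerivAt h (a t * h t) t)
    (hs : s ∈ Icc t₀ t₁) (hs0 : h s = 0) : EqOn h 0 (Icc t₀ t₁) := by
  obtain ⟨C, hC⟩ := isCompact_Icc.exists_bound_of_continuousOn ha
  have hlip (t) (ht : t ∈ Icc t₀ t₁) : LipschitzOnWith C.toNNReal (a t * ·) univ :=
    ((lipschitzWith_smul (a t)).weaken (NNReal.le_toNNReal_of_coe_le (hC t ht))).lipschitzOnWith
  have hcont : ContinuousOn h (Icc t₀ t₁) := fun t ht => (hh t ht).continuousAt.continuousWithinAt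
  have hzero (t : ℝ) (u : Set ℝ) : HasDerivWithinAt (fun _ => (0 : ℝ)) (a t * 0) u t := by
    rw [mul_zero]
    exact hasDerivWithinAt_const t u 0
  rw [← Icc_union_Icc_eq_Icc hs.1 hs.2]
  refine EqOn.union ?_ ?_
  · exact ODE_solution_unique_of_mem_Icc_left (s := fun _ => univ)
      (fun t ht => hlip t ⟨ht.1.le, ht.2.trans hs.2⟩) (hcont.mono (Icc_subset_Icc_right hs.2))
      (fun t ht => (hh t ⟨ht.1.le, ht.2.trans hs.2⟩).hasDerivWithinAt) (fun _ _ => trivial)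
      continuousOn_const (fun t _ => hzero t _) (fun _ _ => trivial) hs0
  · exact ODE_solution_unique_of_mem_Icc_right (s := fun _ => univ)
      (fun t ht => hlip t ⟨hs.1.trans ht.1, ht.2.le⟩) (hcont.mono (Icc_subset_Icc_left hs.1))
      (fun t ht => (hh t ⟨hs.1.trans ht.1, ht.2.le⟩).hasDerivWithinAt) (fun _ _ => trivial)
      continuousOn_const (fun t _ => hzero t _) (fun _ _ => trivial) hs0

theorem tendsto_atBot_of_tendsto_deriv_pos {g g' : ℝ → ℝ} {c : ℝ}
    (hg : ∀ᶠ t in atBot, HasDerivAt g (g' t) t) (hc : Tendsto g' atBot (𝓝 c)) (hc0 : 0 < c) :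
    Tendsto g atBot atBot := by
  obtain ⟨T, hT⟩ := eventually_atBot.1 (hg.and (hc.eventually (lt_mem_nhds (half_lt_self hc0))))
  have hslope : ∀ t ≤ T, c / 2 * (T - t) ≤ g T - g t := by
    intro t ht
    refine (convex_Iic T).mul_sub_le_image_sub_of_le_deriv
      (fun x hx => (hT x hx).1.continuousAt.continuousWithinAt)
      (fun x hx => ?_) (fun x hx => ?_) t ht T self_mem_Iic ht
    · rw [interior_Iic] at hx
      exact (hT x hx.le).1.differentiableAt.differentiableWithinAt
    · rw [interior_Iic] at hx
      rw [(hT x hx.le).1.deriv]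
      exact (hT x hx.le).2.le
  have hlin : Tendsto (fun t => c / 2 * t + (g T - c / 2 * T)) atBot atBot :=
    tendsto_atBot_add_const_right _ _ (tendsto_id.const_mul_atBot (half_pos hc0))
  exact tendsto_atBot_mono' atBot
    (eventually_atBot.2 ⟨T, fun t ht => by linarith [hslope t ht]⟩) hlin

theorem eq_zero_of_tendsto_of_tendsto_deriv_atBot {g g' : ℝ → ℝ} {L c : ℝ}
    (hg : ∀ᶠ t in atBot, HasDerivAt g (g' t) t) (hL : Tendsto g atBot (𝓝 L))
    (hc : Tendsto g' atBot (𝓝 c)) : c = 0 := by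
  rcases lt_trichotomy c 0 with hneg | hzero | hpos
  · have := tendsto_atBot_of_tendsto_deriv_pos (hg.mono fun t ht => ht.neg) hc.neg (neg_pos.2 hneg)
    exact absurd hL.neg (not_tendsto_nhds_of_tendsto_atBot this _)
  · exact hzero
  · have := tendsto_atBot_of_tendsto_deriv_pos hg hc hpos
    exact absurd hL (not_tendsto_nhds_of_tendsto_atBot this _)

section MonotoneLimit

variable {α β : Type*} [LinearOrder α] [ConditionallyCompleteLinearOrder β] [TopologicalSpace β]
  [OrderTopology β] {f : α → β} {a : α}

theorem MonotoneOn.exists_tendsto_atBot (hf : MonotoneOn f (Iic a)) (hb : BddBelow (f '' Iic a)) :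
    ∃ L, Tendsto f atBot (𝓝 L) := by
  have hmono : Monotone fun t => f (min t a) := fun s t hst =>
    hf (min_le_right s a) (min_le_right t a) (min_le_min_right a hst)
  refine ⟨_, (tendsto_atBot_ciInf hmono ?_).congr' ?_⟩
  · exact hb.mono (range_subset_iff.2 fun t => mem_image_of_mem f (min_le_right t a))
  · filter_upwards [eventually_le_atBot a] with t ht
    rw [min_eq_left ht]

theorem AntitoneOn.exists_tendsto_atBot (hf : AntitoneOn f (Iic a)) (hb : BddAbove (f '' Iic a)) :
    ∃ L, Tendsto f atBot (𝓝 L) := by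
  have hanti : Antitone fun t => f (min t a) := fun s t hst =>
    hf (min_le_right s a) (min_le_right t a) (min_le_min_right a hst)
  refine ⟨_, (tendsto_atBot_ciSup hanti ?_).congr' ?_⟩
  · exact hb.mono (range_subset_iff.2 fun t => mem_image_of_mem f (min_le_right t a))
  · filter_upwards [eventually_le_atBot a] with t ht
    rw [min_eq_left ht]

end MonotoneLimit

section Riccati

variable {μ : ℝ → ℝ} {p q : ℝ}

theorem riccati_eq_of_mem_uIcc (hμ : ∀ t ≤ 0, HasDerivAt μ (4 * (μ t - p) * (μ t - q)) t)
    {t : ℝ} (ht : t ≤ 0) (hp : p ∈ uIcc (μ t) (μ 0)) : μ t = p ∧ μ 0 = p := by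
  have hcont : ContinuousOn μ (Icc t 0) := fun s hs =>
    (hμ s hs.2).continuousAt.continuousWithinAt
  obtain ⟨s, hs, hμs⟩ := intermediate_value_uIcc (by rwa [uIcc_of_le ht]) hp
  rw [uIcc_of_le ht] at hs
  -- `μ - p` solves the linear equation `h' = 4 (μ - q) h`.
  have hzero := eqOn_zero_of_hasDerivAt_mul (a := fun s => 4 * (μ s - q))
    (h := fun s => μ s - p) (continuousOn_const.mul (hcont.sub continuousOn_const))
    (fun s hs => ((hμ s hs.2).sub_const p).congr_deriv (by ring)) hs (sub_eq_zero.2 hμs)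
  exact ⟨sub_eq_zero.1 (hzero (left_mem_Icc.2 ht)), sub_eq_zero.1 (hzero (right_mem_Icc.2 ht))⟩

theorem lt_riccati_of_lt (hμ : ∀ t ≤ 0, HasDerivAt μ (4 * (μ t - p) * (μ t - q)) t)
    (h0 : p < μ 0) {t : ℝ} (ht : t ≤ 0) : p < μ t := by
  by_contra! h
  exact h0.ne' (riccati_eq_of_mem_uIcc hμ ht (mem_uIcc.2 (Or.inl ⟨h, h0.le⟩))).2

theorem riccati_le_of_le (hμ : ∀ t ≤ 0, HasDerivAt μ (4 * (μ t - p) * (μ t - q)) t)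
    (h0 : μ 0 ≤ p) {t : ℝ} (ht : t ≤ 0) : μ t ≤ p := by
  by_contra! h
  exact h.ne' (riccati_eq_of_mem_uIcc hμ ht (mem_uIcc.2 (Or.inr ⟨h0, h.le⟩))).1

theorem le_riccati_of_le (hμ : ∀ t ≤ 0, HasDerivAt μ (4 * (μ t - p) * (μ t - q)) t)
    (h0 : p ≤ μ 0) {t : ℝ} (ht : t ≤ 0) : p ≤ μ t := by
  by_contra! h
  exact h.ne (riccati_eq_of_mem_uIcc hμ ht (mem_uIcc.2 (Or.inl ⟨h.le, h0⟩))).1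

theorem riccati_exists_tendsto_of_le (hμ : ∀ t ≤ 0, HasDerivAt μ (4 * (μ t - p) * (μ t - q)) t)
    (hq : ∀ t ≤ 0, q < μ t) (h0 : μ 0 ≤ p) : ∃ L, Tendsto μ atBot (𝓝 L) ∧ μ 0 ≤ L := by
  have hanti : AntitoneOn μ (Iic 0) := by
    refine antitoneOn_of_hasDerivWithinAt_nonpos (convex_Iic 0)
      (f' := fun t => 4 * (μ t - p) * (μ t - q))
      (fun t ht => (hμ t ht).continuousAt.continuousWithinAt) (fun t ht => ?_) (fun t ht => ?_)
    · rw [interior_Iic] at ht ⊢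
      exact (hμ t ht.le).hasDerivWithinAt
    · rw [interior_Iic] at ht
      nlinarith [riccati_le_of_le hμ h0 ht.le, hq t ht.le]
  obtain ⟨L, hL⟩ := hanti.exists_tendsto_atBot
    ⟨p, forall_mem_image.2 fun t ht => riccati_le_of_le hμ h0 ht⟩
  exact ⟨L, hL, ge_of_tendsto hL (eventually_atBot.2 ⟨0, fun t ht => hanti ht self_mem_Iic ht⟩)⟩

theorem riccati_exists_tendsto_of_ge (hμ : ∀ t ≤ 0, HasDerivAt μ (4 * (μ t - p) * (μ t - q)) t)
    (hq : ∀ t ≤ 0, q < μ t) (h0 : p ≤ μ 0) : ∃ L, Tendsto μ atBot (𝓝 L) ∧ p ≤ L := by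
  have hmono : MonotoneOn μ (Iic 0) := by
    refine monotoneOn_of_hasDerivWithinAt_nonneg (convex_Iic 0)
      (f' := fun t => 4 * (μ t - p) * (μ t - q))
      (fun t ht => (hμ t ht).continuousAt.continuousWithinAt) (fun t ht => ?_) (fun t ht => ?_)
    · rw [interior_Iic] at ht ⊢
      exact (hμ t ht.le).hasDerivWithinAt
    · rw [interior_Iic] at ht
      nlinarith [le_riccati_of_le hμ h0 ht.le, hq t ht.le]
  obtain ⟨L, hL⟩ := hmono.exists_tendsto_atBot
    ⟨p, forall_mem_image.2 fun t ht => le_riccati_of_le hμ h0 ht⟩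
  exact ⟨L, hL, ge_of_tendsto hL (eventually_atBot.2 ⟨0, fun t ht => le_riccati_of_le hμ h0 ht⟩)⟩

theorem riccati_rhs_eq_zero_of_tendsto
    (hμ : ∀ t ≤ 0, HasDerivAt μ (4 * (μ t - p) * (μ t - q)) t) {L : ℝ}
    (hL : Tendsto μ atBot (𝓝 L)) : 4 * (L - p) * (L - q) = 0 :=
  eq_zero_of_tendsto_of_tendsto_deriv_atBot (eventually_atBot.2 ⟨0, hμ⟩) hL
    (((hL.sub_const p).const_mul 4).mul (hL.sub_const q))

theorem riccati_tendsto_atBot (hμ : ∀ t ≤ 0, HasDerivAt μ (4 * (μ t - p) * (μ t - q)) t)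
    (hqp : q ≤ p) (hq0 : q < μ 0) : Tendsto μ atBot (𝓝 p) := by
  have hμ' : ∀ t ≤ 0, HasDerivAt μ (4 * (μ t - q) * (μ t - p)) t := fun t ht =>
    (hμ t ht).congr_deriv (by ring)
  have hq : ∀ t ≤ 0, q < μ t := fun t ht => lt_riccati_of_lt hμ' hq0 ht
  obtain ⟨L, hL, hmin⟩ : ∃ L, Tendsto μ atBot (𝓝 L) ∧ min (μ 0) p ≤ L := by
    rcases le_total (μ 0) p with h0 | h0
    · obtain ⟨L, hL, hL0⟩ := riccati_exists_tendsto_of_le hμ hq h0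
      exact ⟨L, hL, min_le_of_left_le hL0⟩
    · obtain ⟨L, hL, hL0⟩ := riccati_exists_tendsto_of_ge hμ hq h0
      exact ⟨L, hL, min_le_of_right_le hL0⟩
  suffices L = p from this ▸ hL
  rcases mul_eq_zero.1 (riccati_rhs_eq_zero_of_tendsto hμ hL) with h | h
  · linarith
  · rcases min_le_iff.1 hmin with h' | h' <;> linarith

end Riccati

/-- for `Ψ₂ ≥ 0`, `μ₊ = (−Ψ₁ + √(Ψ₁² + Ψ₂))/2` and
`μ₋ = (−Ψ₁ − √(Ψ₁² + Ψ₂))/2` are exactly the stationary solutions of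
`μ′ = 4μ(μ + Ψ₁) − Ψ₂`, and `μ₊` is an attractor as `t → −∞`: any solution on
`(−∞, 0]` with `μ(0) > μ₋` converges to `μ₊` as `t → −∞`. -/
theorem stationary_solutions_and_attractor
    (Ψ₁ Ψ₂ : ℝ) (hΨ₂ : 0 ≤ Ψ₂)
    (μp μm : ℝ)
    (hμp : μp = (-Ψ₁ + Real.sqrt (Ψ₁ ^ 2 + Ψ₂)) / 2)
    (hμm : μm = (-Ψ₁ - Real.sqrt (Ψ₁ ^ 2 + Ψ₂)) / 2) :
    (4 * μp * (μp + Ψ₁) - Ψ₂ = 0) ∧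
    (4 * μm * (μm + Ψ₁) - Ψ₂ = 0) ∧
    (∀ x : ℝ, 4 * x * (x + Ψ₁) - Ψ₂ = 0 → x = μp ∨ x = μm) ∧
    (∀ μ : ℝ → ℝ,
      (∀ t ≤ (0 : ℝ), HasDerivAt μ (4 * μ t * (μ t + Ψ₁) - Ψ₂) t) →
      μm < μ 0 →
      Filter.Tendsto μ Filter.atBot (nhds μp)) := by
  have hsq : Real.sqrt (Ψ₁ ^ 2 + Ψ₂) ^ 2 = Ψ₁ ^ 2 + Ψ₂ := Real.sq_sqrt (by positivity)
  have hfactor (x : ℝ) : 4 * x * (x + Ψ₁) - Ψ₂ = 4 * (x - μp) * (x - μm) := by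
    subst hμp hμm
    linear_combination hsq
  have hmp : μm ≤ μp := by
    rw [hμp, hμm]
    linarith [Real.sqrt_nonneg (Ψ₁ ^ 2 + Ψ₂)]
  refine ⟨by rw [hfactor]; ring, by rw [hfactor]; ring, fun x hx => ?_, fun μ hμ h0 => ?_⟩
  · rw [hfactor] at hx
    simpa [sub_eq_zero] using hx
  · exact riccati_tendsto_atBot (fun t ht => hfactor (μ t) ▸ hμ t ht) hmp h0
end
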